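/- arXiv:math/0310146 — 7 statements merged into one kernel-verified Lean document; each statement's English description precedes it below -/
import Mathlib

section
/- Two commutative rings that are Morita equivalent are isomorphic as rings. -/
/-!
The center `End (𝟭 C)` of a category is invariant under additive equivalences: transport a
central element along the functor, then back along the inverse, and the unit isomorphism
identifies the result with the original. For a commutative ring `R` the center of
`ModuleCat R` is `R` itself, a central element being determined by its value at `1 : R`
through naturality with respect to the maps `R → M`, `1 ↦ x`.
-/

open CategoryTheory

universe u

namespace CategoryTheory

instance Functor.isLocalization_isomorphisms_of_isEquivalence {C D : Type*} [Category C]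
    [Category D] (F : C ⥤ D) [F.IsEquivalence] : F.IsLocalization (.isomorphisms C) :=
  .of_isEquivalence F _ le_rfl

namespace CatCenter

variable {C D : Type*} [Category C] [Category D]

lemma map_app_of_iso (r : CatCenter C) {L : C ⥤ C} (u : 𝟭 C ≅ L) (X : C) :
    L.map (r.app X) = r.app (L.obj X) := by
  have hu := u.hom.naturality (r.app X)
  have hr := r.naturality (u.hom.app X)
  simp only [Functor.id_obj, Functor.id_map] at hu hr
  rw [← cancel_epi (u.hom.app X), ← hu, hr]

lemma localization_inverse_localization_functor (e : C ≌ D) (r : CatCenter C) :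
    (r.localization e.functor (.isomorphisms C)).localization e.inverse (.isomorphisms D) = r := by
  refine ext_of_localization (e.functor ⋙ e.inverse) (.isomorphisms C) _ _ fun X => ?_
  simp only [Functor.comp_obj, localization_app]
  exact map_app_of_iso r e.unitIso X

end CatCenter

noncomputable def Equivalence.catCenterRingEquiv {C D : Type*} [Category C] [Category D]
    [Preadditive C] [Preadditive D] (e : C ≌ D) [e.functor.Additive] :
    CatCenter C ≃+* CatCenter D :=
  RingEquiv.ofRingHom (CatCenter.localizationRingHom e.functor (.isomorphisms C))
    (CatCenter.localizationRingHom e.inverse (.isomorphisms D))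
    (RingHom.ext (CatCenter.localization_inverse_localization_functor e.symm))
    (RingHom.ext (CatCenter.localization_inverse_localization_functor e))

end CategoryTheory

namespace ModuleCat

variable (R : Type u) [CommRing R]

lemma toCatCenter_bijective : Function.Bijective (Linear.toCatCenter R (ModuleCat.{u} R)) := by
  constructor
  · intro a b hab
    simpa using congr(NatTrans.app $hab (of R R) (1 : R))
  · intro z
    refine ⟨z.app (of R R) 1, CatCenter.ext _ _ fun M => ?_⟩
    ext x
    have hx : z.app M x = z.app (of R R) 1 • x := by
      simpa using congr($(z.naturality (ofHom (LinearMap.toSpanSingleton R M x))) (1 : R))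
    simp [hx]

end ModuleCat

/-- Two commutative rings that are Morita equivalent (their module categories are
equivalent) are isomorphic as rings. -/
theorem commRing_isom_of_morita (R S : Type u) [CommRing R] [CommRing S]
    (h : Nonempty (ModuleCat.{u} R ≌ ModuleCat.{u} S)) :
    Nonempty (R ≃+* S) := by
  obtain ⟨e⟩ := h
  have : e.functor.Additive := e.functor.additive_of_preserves_binary_products
  exact ⟨(RingEquiv.ofBijective _ (ModuleCat.toCatCenter_bijective R)).trans <|
    e.catCenterRingEquiv.trans (RingEquiv.ofBijective _ (ModuleCat.toCatCenter_bijective S)).symm⟩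
end

section
/- Let R be a commutative ring and Q an invertible R-module (Q ⊗_R Q' ≅ R for some R-module Q'). Then Q is finitely generated and projective as an R-module. -/
open TensorProduct

/-- Let `R` be a commutative ring and `Q` an invertible `R`-module
(`Q ⊗[R] Q' ≅ R` for some `R`-module `Q'`).  Then `Q` is finitely generated and
projective as an `R`-module. -/
theorem invertible_module_finite_projective (R : Type u) [CommRing R]
    (Q : Type u) [AddCommGroup Q] [Module R Q]
    (h : ∃ (Q' : Type u) (_ : AddCommGroup Q') (_ : Module R Q'),
      Nonempty (Q ⊗[R] Q' ≃ₗ[R] R)) :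
    Module.Finite R Q ∧ Module.Projective R Q := by
  obtain ⟨Q', _, _, ⟨e⟩⟩ := h
  have : Module.Invertible R Q := .left e
  exact ⟨inferInstance, inferInstance⟩
end

section
/- In the ring R = ℤ[u]/(u² − 5u), the ideal Q = (2, u) generated by 2 and u is an invertible R-module: the evaluation map Hom_R(Q, R) ⊗_R Q → R is an isomorphism. -/
open Polynomial

/-- The ring `R = ℤ[u]/(u² - 5u)`. -/
def MoritaExample.R : Type :=
  Polynomial ℤ ⧸ (Ideal.span {(X : Polynomial ℤ) ^ 2 - 5 * X} : Ideal (Polynomial ℤ))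

noncomputable instance : CommRing MoritaExample.R := Ideal.Quotient.commRing _

/-- The image of `u` in `R = ℤ[u]/(u² - 5u)`. -/
noncomputable def MoritaExample.u : MoritaExample.R :=
  Ideal.Quotient.mk _ (X : Polynomial ℤ)

/-- The ideal `Q = (2, u)` of `R`. -/
noncomputable def MoritaExample.Q : Ideal MoritaExample.R :=
  Ideal.span {2, MoritaExample.u}

/-!
The square `Q² = (4, 2u, u²) = (u - 4)` is principal, generated by a nonzerodivisor (evaluation
at `u = 0` and `u = 5` embeds `R` in `ℤ × ℤ`, sending `u - 4` to `(-4, 1)`). Hence `Q` is an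
invertible fractional ideal, with inverse `(u - 4)⁻¹ Q` in the total ring of fractions, and
invertible fractional ideals are invertible modules.
-/
theorem Polynomial.mul_X_sub_C_dvd_iff {R : Type*} [CommRing R] [IsDomain R] {a b : R}
    (hab : a ≠ b) {p : R[X]} : (X - C a) * (X - C b) ∣ p ↔ p.IsRoot a ∧ p.IsRoot b := by
  refine ⟨fun h ↦ ⟨dvd_iff_isRoot.mp (dvd_of_mul_right_dvd h),
    dvd_iff_isRoot.mp (dvd_of_mul_left_dvd h)⟩, fun ⟨ha, hb⟩ ↦ ?_⟩
  obtain ⟨q, rfl⟩ := dvd_iff_isRoot.mpr ha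
  have hqb : q.IsRoot b := by
    simpa [sub_eq_zero, hab.symm] using hb
  exact mul_dvd_mul_left _ (dvd_iff_isRoot.mpr hqb)

theorem Ideal.moduleInvertible_of_mul_eq_span_singleton {R : Type*} [CommRing R]
    {I J : Ideal R} {d : R} (hd : d ∈ nonZeroDivisors R) (h : I * J = Ideal.span {d}) :
    Module.Invertible R I := by
  let ι := Algebra.ofId R (FractionRing R)
  have hι : Function.Injective ι := IsFractionRing.injective R (FractionRing R)
  have hd_unit : IsUnit (ι d) := IsLocalization.map_units _ ⟨d, hd⟩
  have hunit : IsUnit (Submodule.map ι.toLinearMap I) := by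
    refine .of_mul_eq_one (Submodule.span R {(↑hd_unit.unit⁻¹ : FractionRing R)} *
      Submodule.map ι.toLinearMap J) ?_
    rw [mul_left_comm, ← Submodule.map_mul, h, Ideal.span, Submodule.map_span,
      Set.image_singleton, Submodule.span_mul_span, Set.singleton_mul_singleton,
      Submodule.one_eq_span]
    simp
  have : Module.Invertible R (Submodule.map ι.toLinearMap I) := hunit.unit_spec ▸ inferInstance
  exact .congr (Submodule.equivMapOfInjective ι.toLinearMap hι I).symm

namespace MoritaExample

noncomputable def mk : ℤ[X] →+* R := Ideal.Quotient.mk _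

theorem mk_eq_zero_iff {p : ℤ[X]} : mk p = 0 ↔ p.eval 0 = 0 ∧ p.eval 5 = 0 := by
  have hfactor : (X : ℤ[X]) ^ 2 - 5 * X = (X - C 0) * (X - C 5) := by
    rw [C_0, sub_zero, C_ofNat]; ring
  refine Ideal.Quotient.eq_zero_iff_mem.trans ?_
  rw [Ideal.mem_span_singleton, hfactor, Polynomial.mul_X_sub_C_dvd_iff (by norm_num)]
  rfl

theorem mk_surjective : Function.Surjective mk := Ideal.Quotient.mk_surjective

theorem mk_X : mk X = u := rfl

theorem u_mul_u : u * u = 5 * u := by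
  have h : mk (X * X - 5 * X) = 0 := mk_eq_zero_iff.mpr (by simp)
  rw [map_sub, map_mul, map_mul, map_ofNat, mk_X, sub_eq_zero] at h
  exact h

theorem u_sub_four_mem_nonZeroDivisors : u - 4 ∈ nonZeroDivisors R := by
  refine mem_nonZeroDivisors_iff_right.mpr fun x hx ↦ ?_
  obtain ⟨p, rfl⟩ := mk_surjective x
  have : mk (p * (X - 4)) = 0 := by rwa [map_mul, map_sub, mk_X, map_ofNat]
  rw [mk_eq_zero_iff] at this ⊢
  simp only [eval_mul, eval_sub, eval_X, eval_ofNat] at this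
  omega

theorem Q_mul_Q : Q * Q = Ideal.span {u - 4} := by
  have h2 : (2 : R) ∈ Q := Ideal.subset_span (by simp)
  have hu : u ∈ Q := Ideal.subset_span (by simp)
  refine le_antisymm (Ideal.mul_le.mpr fun a ha b hb ↦ ?_) ?_
  · obtain ⟨a₁, a₂, rfl⟩ := Ideal.mem_span_pair.mp ha
    obtain ⟨b₁, b₂, rfl⟩ := Ideal.mem_span_pair.mp hb
    -- `4 = (u - 4)(u - 1)`, `2u = (u - 4) 2u` and `u² = (u - 4) 5u`
    refine Ideal.mem_span_singleton'.mpr ⟨a₁ * b₁ * (u - 1) + (a₁ * b₂ + a₂ * b₁) * (2 * u)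
      + a₂ * b₂ * (5 * u), ?_⟩
    linear_combination (a₁ * b₁ + 2 * (a₁ * b₂ + a₂ * b₁) + 4 * a₂ * b₂) * u_mul_u
  · rw [Ideal.span_singleton_le_iff_mem,
      show u - 4 = u * (u - 2) - 2 * (u + 2) by linear_combination -u_mul_u]
    exact sub_mem (Ideal.mul_mem_mul hu (sub_mem hu h2))
      (Ideal.mul_mem_mul h2 (add_mem hu h2))

end MoritaExample

/-- In the ring `R = ℤ[u]/(u² - 5u)`, the ideal `Q = (2, u)` is an invertible
`R`-module: the evaluation map `Hom_R(Q, R) ⊗[R] Q → R`, `φ ⊗ x ↦ φ(x)`, is an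
isomorphism. -/
theorem MoritaExample.Q_invertible :
    Function.Bijective (contractLeft MoritaExample.R MoritaExample.Q) :=
  (Ideal.moduleInvertible_of_mul_eq_span_singleton
    MoritaExample.u_sub_four_mem_nonZeroDivisors MoritaExample.Q_mul_Q).bijective
end

section
/- In the ring R = ℤ[u]/(u² − 5u), the ideal Q = (2, u) is not a free R-module, but Q becomes free of rank one after inverting 2 (i.e., Q ⊗_R R[1/2] ≅ R[1/2] since the inclusion Q → R becomes an isomorphism after localizing at 2). -/
/-!
A free ideal `I` of a nontrivial commutative ring is principal: for any two elements `x, y ∈ I`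
the relation `y • x = x • y` shows that a basis of `I` has at most one element.
The ideal `Q` is not principal, as the two evaluations `R → ℤ` at `u = 0` and `u = 5`, which
agree modulo `5`, show. A generator `g` would divide `2` and lie in `Q`, forcing `g(0) = ±2`. It
would also divide `u`, and since `g(0) ≠ 0` the cofactor vanishes at `0`, so `5` divides its value
at `5`, forcing `g(5) = ±1`. This contradicts `g(5) ≡ g(0) mod 5`.
Finally `2 ∈ Q` kills `R ⧸ Q`, so the inclusion `Q → R` becomes bijective once `2` is inverted.
-/

open Polynomial

theorem Ideal.subsingleton_basis_index {R ι : Type*} [CommRing R] [Nontrivial R] {I : Ideal R}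
    (b : Module.Basis ι R I) : Subsingleton ι := by
  refine ⟨fun i j => by_contra fun hij => b.ne_zero j ?_⟩
  have hind : LinearIndependent R ![b i, b j] := by
    convert b.linearIndependent.comp ![i, j] ?_
    · ext k; fin_cases k <;> rfl
    · intro k l; fin_cases k <;> fin_cases l <;> simp [hij, Ne.symm hij]
  have hcomm : (b j : R) • b i = (b i : R) • b j := Subtype.ext (mul_comm _ _)
  exact Subtype.ext (hind.eq_zero_of_pair' hcomm).1

theorem Ideal.isPrincipal_of_free {R : Type*} [CommRing R] [Nontrivial R] (I : Ideal R)
    [Module.Free R I] : I.IsPrincipal := by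
  rw [← Submodule.rank_le_one_iff_isPrincipal, ← (Module.Free.chooseBasis R I).mk_eq_rank'',
    Cardinal.le_one_iff_subsingleton]
  exact Ideal.subsingleton_basis_index (Module.Free.chooseBasis R I)

theorem LocalizedModule.map_subtype_surjective {R M : Type*} [CommRing R] [AddCommMonoid M]
    [Module R M] (S : Submonoid R) (N : Submodule R M) (h : ∀ m : M, ∃ s : S, s • m ∈ N) :
    Function.Surjective (LocalizedModule.map S N.subtype) := by
  intro z
  induction z using LocalizedModule.induction_on with
  | h m t =>
    obtain ⟨s, hs⟩ := h m
    refine ⟨LocalizedModule.mk ⟨s • m, hs⟩ (s * t), ?_⟩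
    rw [LocalizedModule.map_mk, LocalizedModule.mk_eq]
    exact ⟨1, by simp [mul_smul, smul_comm t s m]⟩

theorem LocalizedModule.map_subtype_bijective {R M : Type*} [CommRing R] [AddCommMonoid M]
    [Module R M] (S : Submonoid R) (N : Submodule R M) (h : ∀ m : M, ∃ s : S, s • m ∈ N) :
    Function.Bijective (LocalizedModule.map S N.subtype) :=
  ⟨LocalizedModule.map_injective S N.subtype N.injective_subtype,
    LocalizedModule.map_subtype_surjective S N h⟩

namespace MoritaExample

noncomputable def evalAt (a : ℤ) (ha : a ^ 2 - 5 * a = 0) : R →+* ℤ :=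
  Ideal.Quotient.lift _ (evalRingHom a) fun p hp => by
    obtain ⟨c, rfl⟩ := Ideal.mem_span_singleton'.mp hp
    simp [ha]

noncomputable abbrev ev₀ : R →+* ℤ := evalAt 0 (by norm_num)

noncomputable abbrev ev₅ : R →+* ℤ := evalAt 5 (by norm_num)

theorem evalAt_mk (a : ℤ) (ha : a ^ 2 - 5 * a = 0) (p : ℤ[X]) :
    evalAt a ha (Ideal.Quotient.mk _ p) = p.eval a :=
  rfl

theorem evalAt_u (a : ℤ) (ha : a ^ 2 - 5 * a = 0) : evalAt a ha u = a := by
  simp [u, evalAt_mk]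

theorem five_dvd_ev₅_sub_ev₀ (x : R) : 5 ∣ ev₅ x - ev₀ x := by
  obtain ⟨p, rfl⟩ := Ideal.Quotient.mk_surjective x
  simpa [evalAt_mk] using sub_dvd_eval_sub (5 : ℤ) 0 p

theorem two_mem_Q : (2 : R) ∈ Q := Ideal.subset_span (by simp)

theorem u_mem_Q : u ∈ Q := Ideal.subset_span (by simp)

theorem Q_le_comap_ev₀ : Q ≤ (Ideal.span {2}).comap ev₀ := by
  rw [Q, Ideal.span_le]
  rintro x (rfl | rfl)
  · simp [map_ofNat]
  · simp [evalAt_u]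

instance : Nontrivial R := ev₀.domain_nontrivial

theorem Q_not_isPrincipal : ¬ Q.IsPrincipal := by
  rintro ⟨g, hQ⟩
  change Q = Ideal.span {g} at hQ
  have hg : g ∈ Q := hQ ▸ Submodule.mem_span_singleton_self g
  have hdvd {x : R} (hx : x ∈ Q) : g ∣ x := Ideal.mem_span_singleton.mp (hQ ▸ hx)
  obtain ⟨s, hs⟩ := hdvd u_mem_Q
  have hg₀ : (ev₀ g).natAbs = 2 := Nat.dvd_antisymm
    (by simpa [map_ofNat] using Int.natAbs_dvd_natAbs.mpr (map_dvd ev₀ (hdvd two_mem_Q)))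
    (Int.natAbs_dvd_natAbs.mpr (Ideal.mem_span_singleton.mp (Q_le_comap_ev₀ hg)))
  have hs₀ : ev₀ s = 0 := by
    have := congrArg ev₀ hs
    simp only [map_mul, evalAt_u] at this
    exact (mul_eq_zero.mp this.symm).resolve_left (by omega)
  obtain ⟨k, hk⟩ : 5 ∣ ev₅ s := by simpa [hs₀] using five_dvd_ev₅_sub_ev₀ s
  have hg₅ : ev₅ g * k = 1 := by
    have := congrArg ev₅ hs
    simp only [map_mul, evalAt_u, hk] at this
    linarith
  have hcong := five_dvd_ev₅_sub_ev₀ g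
  rcases Int.eq_one_or_neg_one_of_mul_eq_one hg₅ with h | h <;> omega

end MoritaExample

/-- In `R = ℤ[u]/(u² - 5u)`, the ideal `Q = (2, u)` is not free as an `R`-module, but
becomes free of rank one after inverting `2`: the inclusion `Q → R` becomes an
isomorphism after localizing at the powers of `2`. -/
theorem MoritaExample.Q_not_free_but_locally_free :
    ¬ Module.Free MoritaExample.R MoritaExample.Q ∧
      Function.Bijective
        (LocalizedModule.map (Submonoid.powers (2 : MoritaExample.R))
          (MoritaExample.Q.subtype)) :=
  ⟨fun _ => MoritaExample.Q_not_isPrincipal (Ideal.isPrincipal_of_free _),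
    LocalizedModule.map_subtype_bijective _ _ fun r =>
      ⟨⟨2, Submonoid.mem_powers 2⟩, MoritaExample.Q.mul_mem_right r MoritaExample.two_mem_Q⟩⟩
end

section
/- A projective module P over a ring R is small (Hom_R(P,-) preserves arbitrary direct sums) if and only if P is finitely generated. -/
/-! The canonical map is always injective, and it is surjective exactly when every linear map
`P → ⨁ᵢ Nᵢ` lands in finitely many summands. A finitely generated `P` has this property since the
images of its finitely many generators do. Conversely, a projective `P` has coordinates
`s : P → R^(P)` splitting the linear combination map `R^(P) → P`; if `s` lands in the finitely many
coordinates `T`, then every `x = ∑ₚ sₚ(x) • p` lies in the span of `T`. -/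

open DirectSum

/-- The canonical map `⨁ᵢ Hom_R(P, Nᵢ) →+ Hom_R(P, ⨁ᵢ Nᵢ)`. -/
noncomputable def homDirectSumComparison (R : Type u) [Ring R]
    (P : Type u) [AddCommGroup P] [Module R P]
    {ι : Type u} [DecidableEq ι] (N : ι → Type u)
    [∀ i, AddCommGroup (N i)] [∀ i, Module R (N i)] :
    (⨁ i, (P →ₗ[R] N i)) →+ (P →ₗ[R] ⨁ i, N i) :=
  DirectSum.toAddMonoid fun i =>
    AddMonoidHom.mk' (fun f => (DirectSum.lof R ι N i).comp f)
      (fun f g => by ext x; simp)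

universe u

section

variable {R : Type u} [Ring R] {P : Type u} [AddCommGroup P] [Module R P]
  {ι : Type u} [DecidableEq ι] {N : ι → Type u} [∀ i, AddCommGroup (N i)] [∀ i, Module R (N i)]

@[simp]
lemma homDirectSumComparison_apply (g : ⨁ i, (P →ₗ[R] N i)) (x : P) (i : ι) :
    homDirectSumComparison R P N g x i = g i x := by
  induction g using DirectSum.induction_on with
  | zero => simp
  | of j f =>
    by_cases h : j = i
    · subst h
      simp [homDirectSumComparison]
    · simp only [homDirectSumComparison, DirectSum.toAddMonoid_of, AddMonoidHom.mk'_apply,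
        LinearMap.comp_apply, DirectSum.lof_eq_of]
      rw [DirectSum.of_eq_of_ne _ _ _ (Ne.symm h), DirectSum.of_eq_of_ne _ _ _ (Ne.symm h),
        LinearMap.zero_apply]
  | add a b ha hb => simp [ha, hb]

lemma homDirectSumComparison_injective : Function.Injective (homDirectSumComparison R P N) :=
  fun a b hab => DFinsupp.ext fun i => LinearMap.ext fun x => by
    simpa using congr($hab x i)

lemma homDirectSumComparison_surjective_iff :
    Function.Surjective (homDirectSumComparison R P N) ↔
      ∀ f : P →ₗ[R] ⨁ i, N i, ∃ T : Finset ι, ∀ x, ∀ i ∉ T, f x i = 0 := by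
  classical
  constructor
  · intro hsurj f
    obtain ⟨g, rfl⟩ := hsurj f
    refine ⟨g.support, fun x i hi => ?_⟩
    rw [homDirectSumComparison_apply, DFinsupp.notMem_support_iff.1 hi, LinearMap.zero_apply]
  · intro hfin f
    obtain ⟨T, hT⟩ := hfin f
    refine ⟨DFinsupp.mk T fun i => DirectSum.component R ι N i ∘ₗ f, ?_⟩
    ext x i
    by_cases hi : i ∈ T
    · simp [hi]
      rfl
    · simp [hi, hT x i]

lemma Module.Finite.exists_finset_forall_apply_eq_zero [Module.Finite R P]
    (f : P →ₗ[R] ⨁ i, N i) : ∃ T : Finset ι, ∀ x, ∀ i ∉ T, f x i = 0 := by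
  classical
  obtain ⟨s, hs⟩ := Module.Finite.fg_top (R := R) (M := P)
  refine ⟨s.biUnion fun y => (f y).support, fun x i hi => ?_⟩
  have hx : x ∈ Submodule.span R (s : Set P) := hs ▸ Submodule.mem_top
  induction hx using Submodule.span_induction with
  | mem y hy => exact DFinsupp.notMem_support_iff.1 fun h => hi (Finset.mem_biUnion.2 ⟨y, hy, h⟩)
  | zero => simp
  | add y z _ _ hy hz => simp [hy, hz]
  | smul r y _ hy => rw [map_smul, DirectSum.smul_apply, hy, smul_zero]

end

lemma Module.Finite.of_projective_of_forall_exists_finset {R : Type u} [Ring R]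
    {P : Type u} [AddCommGroup P] [Module R P] [Module.Projective R P]
    (h : ∀ f : P →ₗ[R] ⨁ _ : P, R, ∃ T : Finset P, ∀ x, ∀ p ∉ T, f x p = 0) :
    Module.Finite R P := by
  classical
  obtain ⟨s, hs⟩ := Module.projective_def.1 ‹_›
  obtain ⟨T, hT⟩ := h (finsuppLEquivDirectSum R R P ∘ₗ s)
  refine ⟨⟨T, eq_top_iff.2 fun x _ => ?_⟩⟩
  have hsupp : s x ∈ Finsupp.supported R R (T : Set P) := fun p hp =>
    by_contra fun hpT => Finsupp.mem_support_iff.1 hp (hT x p hpT)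
  rw [← hs x, ← Set.image_id (T : Set P), Finsupp.span_image_eq_map_linearCombination]
  exact Submodule.mem_map_of_mem hsupp

/-- A projective module `P` over a ring `R` is small (the canonical map
`⨁ᵢ Hom_R(P, Nᵢ) → Hom_R(P, ⨁ᵢ Nᵢ)` is bijective for every family `N`) if and only
if `P` is finitely generated. -/
theorem projective_small_iff_finitelyGenerated (R : Type u) [Ring R]
    (P : Type u) [AddCommGroup P] [Module R P] [Module.Projective R P] :
    (∀ (ι : Type u) [DecidableEq ι] (N : ι → Type u)
      [∀ i, AddCommGroup (N i)] [∀ i, Module R (N i)],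
        Function.Bijective (homDirectSumComparison R P N)) ↔ Module.Finite R P := by
  classical
  constructor
  · intro hsmall
    exact Module.Finite.of_projective_of_forall_exists_finset
      (homDirectSumComparison_surjective_iff.1 (hsmall P fun _ => R).2)
  · intro _ ι _ N _ _
    exact ⟨homDirectSumComparison_injective,
      homDirectSumComparison_surjective_iff.2 Module.Finite.exists_finset_forall_apply_eq_zero⟩
end

section
/- Let T be a triangulated category with arbitrary coproducts and let M be a small object of T. Then M generates T (the smallest full triangulated subcategory containing M and closed under coproducts is all of T) if and only if M detects objects: an object X of T is zero if and only if T(M[n], X) = 0 for all integers n. -/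
/-!
If `M` generates, fix `X` with `Hom(M⟦n⟧, X) = 0` for all `n`. The objects `Y` with
`Hom(Y, X⟦n⟧) = 0` for all `n` form a localizing class containing `M`, hence containing `X`,
so `𝟙 X = 0`.

Conversely, let `S` be a localizing class containing `M` and let `X` be arbitrary. Build a tower
`U₀ → U₁ → ⋯` over `X` inside `S`: `U₀` is a coproduct of shifts of `M` through which every
`M⟦n⟧ ⟶ X` factors, and `U_{k+1}` is the cone of a coproduct of shifts of `M` hitting every
`M⟦n⟧ ⟶ U_k` that dies in `X`. Its homotopy colimit `Y`, the cone of `1 - shift` on `∐ U_k`,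
lies in `S`. As `M` is small, every `M⟦n⟧ ⟶ Y` comes from a single `U_N`, so `Y ⟶ X` is bijective
on `Hom(M⟦n⟧, -)`; its cone is then invisible to all `M⟦n⟧`, hence zero, and `X ≅ Y ∈ S`.
-/

open CategoryTheory Limits Pretriangulated DirectSum

universe v u

variable {C : Type u} [Category.{v} C] [Preadditive C] [HasCoproducts.{v} C]

/-- The canonical comparison map `⊕ᵢ Hom(X, Yᵢ) →+ Hom(X, ∐ᵢ Yᵢ)`. -/
noncomputable def coproductComparison (X : C) {ι : Type v} [DecidableEq ι]
    (Y : ι → C) : (⨁ (i : ι), (X ⟶ Y i)) →+ (X ⟶ ∐ Y) :=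
  DirectSum.toAddMonoid fun i =>
    AddMonoidHom.mk' (fun f => f ≫ Sigma.ι Y i)
      (fun _ _ => Preadditive.add_comp _ _ _ _ _ _)

/-- An object `X` is *small* (compact) if the canonical map
`⊕ᵢ Hom(X, Yᵢ) → Hom(X, ∐ᵢ Yᵢ)` is bijective for every family `Y`. -/
def IsSmallObject (X : C) : Prop :=
  ∀ (ι : Type v) [DecidableEq ι] (Y : ι → C),
    Function.Bijective (coproductComparison X Y)

variable [HasZeroObject C] [HasShift C ℤ] [∀ n : ℤ, (shiftFunctor C n).Additive]
  [Pretriangulated C]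

/-- A class of objects of a triangulated category is *localizing* if it is closed
under isomorphisms, shifts, forming the third object of a distinguished triangle, and
arbitrary coproducts. -/
structure IsLocalizingClass (S : Set C) : Prop where
  iso_closed : ∀ {X Y : C}, (X ≅ Y) → X ∈ S → Y ∈ S
  shift_mem : ∀ (X : C) (n : ℤ), X ∈ S → X⟦n⟧ ∈ S
  triangle_closed : ∀ (T : Triangle C), T ∈ (distTriang C) →
    T.obj₁ ∈ S → T.obj₂ ∈ S → T.obj₃ ∈ S
  coproduct_mem : ∀ {ι : Type v} (Y : ι → C), (∀ i, Y i ∈ S) → (∐ Y) ∈ S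

section SmallObject

variable {C : Type u} [Category.{v} C] [Preadditive C] [HasCoproducts.{v} C]

@[simp]
lemma coproductComparison_of (X : C) {ι : Type v} [DecidableEq ι] (Y : ι → C) (i : ι)
    (f : X ⟶ Y i) : coproductComparison X Y (DirectSum.of _ i f) = f ≫ Sigma.ι Y i := by
  simp [coproductComparison]

lemma coproductComparison_comp_π (X : C) {ι : Type v} [DecidableEq ι] (Y : ι → C)
    (α : ⨁ i, (X ⟶ Y i)) (j : ι) : coproductComparison X Y α ≫ Sigma.π Y j = α j := by
  induction α using DirectSum.induction_on with
  | zero => simp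
  | of i f =>
    rw [coproductComparison_of, Category.assoc]
    by_cases hij : i = j
    · subst hij
      simp
    · rw [Sigma.ι_π_of_ne _ hij, Limits.comp_zero, DirectSum.of_eq_of_ne _ _ _ (Ne.symm hij)]
  | add α β hα hβ => rw [map_add, Preadditive.add_comp, hα, hβ, DirectSum.add_apply]

lemma IsSmallObject.eq_zero_of_comp_π_eq_zero {X : C} (hX : IsSmallObject X) {ι : Type v}
    [DecidableEq ι] {Y : ι → C} {f : X ⟶ ∐ Y} (hf : ∀ j, f ≫ Sigma.π Y j = 0) : f = 0 := by
  obtain ⟨α, rfl⟩ := (hX ι Y).surjective f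
  have : α = 0 := DFinsupp.ext fun j => by rw [← coproductComparison_comp_π, hf]; rfl
  rw [this, map_zero]

lemma IsSmallObject.of_adjunction {D : Type*} [Category.{v} D] [Preadditive D]
    [HasCoproducts.{v} D] {F : C ⥤ D} {G : D ⥤ C} (adj : F ⊣ G) [F.Additive]
    [PreservesColimitsOfSize.{v, v} G] {X : C} (hX : IsSmallObject X) :
    IsSmallObject (F.obj X) := by
  intro ι _ Y
  let κ := asIso (sigmaComparison G Y)
  let E : (⨁ i, (F.obj X ⟶ Y i)) ≃+ ⨁ i, (X ⟶ G.obj (Y i)) :=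
    DFinsupp.mapRange.addEquiv fun i => adj.homAddEquiv X (Y i)
  have hsquare : adj.homEquiv X (∐ Y) ∘ coproductComparison (F.obj X) Y =
      κ.homToEquiv ∘ coproductComparison X (fun i => G.obj (Y i)) ∘ E := by
    refine congrArg DFunLike.coe (DirectSum.addHom_ext (f :=
      (adj.homAddEquiv X (∐ Y)).toAddMonoidHom.comp (coproductComparison (F.obj X) Y))
      (g := (Preadditive.rightComp X κ.hom).comp
        ((coproductComparison X (fun i => G.obj (Y i))).comp E.toAddMonoidHom))
      fun i f => ?_)
    have hE : E (DirectSum.of _ i f) = DirectSum.of _ i (adj.homEquiv X (Y i) f) :=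
      DFinsupp.mapRange_single (hf := fun i => map_zero _)
    simp [hE, κ, Preadditive.rightComp, Adjunction.homEquiv_naturality_right]
  refine ((adj.homEquiv X (∐ Y)).bijective.of_comp_iff' _).1 ?_
  rw [hsquare]
  exact κ.homToEquiv.bijective.comp ((hX ι _).comp E.bijective)

end SmallObject

section Telescope

variable {C : Type u} [Category.{v} C] [Preadditive C] [HasCoproducts.{v} C]
  (U : ℕ → C) (u : ∀ k, U k ⟶ U (k + 1))

noncomputable abbrev natCoprod : C := ∐ fun i : ULift.{v} ℕ => U i.down

noncomputable abbrev natCoprod.ι (k : ℕ) : U k ⟶ natCoprod U :=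
  Sigma.ι (fun i : ULift.{v} ℕ => U i.down) ⟨k⟩

noncomputable abbrev natCoprod.π (k : ℕ) : natCoprod U ⟶ U k :=
  Sigma.π (fun i : ULift.{v} ℕ => U i.down) ⟨k⟩

noncomputable def telescopeDiff : natCoprod U ⟶ natCoprod U :=
  Sigma.desc fun i => natCoprod.ι U i.down - u i.down ≫ natCoprod.ι U (i.down + 1)

@[simp]
lemma ι_telescopeDiff (k : ℕ) :
    natCoprod.ι U k ≫ telescopeDiff U u = natCoprod.ι U k - u k ≫ natCoprod.ι U (k + 1) := by
  simp [telescopeDiff]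

@[simp]
lemma ι_telescopeDiff_assoc (k : ℕ) {Z : C} (h : natCoprod U ⟶ Z) :
    natCoprod.ι U k ≫ telescopeDiff U u ≫ h =
      natCoprod.ι U k ≫ h - u k ≫ natCoprod.ι U (k + 1) ≫ h := by
  rw [← Category.assoc, ι_telescopeDiff, Preadditive.sub_comp, Category.assoc]

lemma telescopeDiff_π_zero : telescopeDiff U u ≫ natCoprod.π U 0 = natCoprod.π U 0 := by
  refine Sigma.hom_ext _ _ fun ⟨i⟩ => ?_
  simp [Sigma.ι_π]

lemma telescopeDiff_π_succ (k : ℕ) : telescopeDiff U u ≫ natCoprod.π U (k + 1) =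
    natCoprod.π U (k + 1) - natCoprod.π U k ≫ u k := by
  refine Sigma.hom_ext _ _ fun ⟨i⟩ => ?_
  by_cases hik : i = k
  · subst hik
    simp [Sigma.ι_π]
  · simp [Sigma.ι_π, Sigma.ι_π_assoc, hik]

variable {U u}

lemma IsSmallObject.eq_zero_of_comp_telescopeDiff_eq_zero {K : C} (hK : IsSmallObject K)
    {f : K ⟶ natCoprod U} (hf : f ≫ telescopeDiff U u = 0) : f = 0 := by
  have hπ : ∀ k, f ≫ natCoprod.π U k = 0 := by
    intro k
    induction k with
    | zero => rw [← telescopeDiff_π_zero U u, ← Category.assoc, hf, Limits.zero_comp]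
    | succ k ih =>
      have := congrArg (· ≫ natCoprod.π U (k + 1)) hf
      simpa [telescopeDiff_π_succ, reassoc_of% ih] using this
  exact hK.eq_zero_of_comp_π_eq_zero fun ⟨k⟩ => hπ k

lemma ι_comp_eq_of_telescopeDiff_comp_eq_zero {Y : C} {σ : natCoprod U ⟶ Y}
    (hσ : telescopeDiff U u ≫ σ = 0) (k : ℕ) :
    natCoprod.ι U k ≫ σ = u k ≫ natCoprod.ι U (k + 1) ≫ σ := by
  have := congrArg (natCoprod.ι U k ≫ ·) hσ
  simpa [sub_eq_zero] using this

lemma exists_comp_ι_comp_eq_of_le {Y K : C} {σ : natCoprod U ⟶ Y}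
    (hσ : telescopeDiff U u ≫ σ = 0) {N N' : ℕ} (hN : N ≤ N') (β : K ⟶ U N) :
    ∃ γ : K ⟶ U N', β ≫ natCoprod.ι U N ≫ σ = γ ≫ natCoprod.ι U N' ≫ σ := by
  induction N', hN using Nat.le_induction with
  | base => exact ⟨β, rfl⟩
  | succ N' _ ih =>
    obtain ⟨γ, hγ⟩ := ih
    exact ⟨γ ≫ u N', by rw [hγ, ι_comp_eq_of_telescopeDiff_comp_eq_zero hσ, Category.assoc]⟩

lemma IsSmallObject.exists_comp_eq_ι_comp {K Y : C} (hK : IsSmallObject K)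
    {σ : natCoprod U ⟶ Y} (hσ : telescopeDiff U u ≫ σ = 0) (f : K ⟶ natCoprod U) :
    ∃ (N : ℕ) (β : K ⟶ U N), f ≫ σ = β ≫ natCoprod.ι U N ≫ σ := by
  obtain ⟨α, rfl⟩ := (hK (ULift.{v} ℕ) _).surjective f
  induction α using DirectSum.induction_on with
  | zero => exact ⟨0, 0, by simp⟩
  | of i g => exact ⟨i.down, g, by simp⟩
  | add α α' hα hα' =>
    obtain ⟨N, β, hβ⟩ := hα
    obtain ⟨N', β', hβ'⟩ := hα'
    obtain ⟨γ, hγ⟩ := exists_comp_ι_comp_eq_of_le hσ (le_max_left N N') β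
    obtain ⟨γ', hγ'⟩ := exists_comp_ι_comp_eq_of_le hσ (le_max_right N N') β'
    exact ⟨max N N', γ + γ', by rw [map_add, Preadditive.add_comp, hβ, hβ', hγ, hγ',
      Preadditive.add_comp]⟩

end Telescope

section Shift

variable {C : Type u} [Category.{v} C] [Preadditive C] [HasShift C ℤ]

lemma IsSmallObject.shift [HasCoproducts.{v} C] [∀ n : ℤ, (shiftFunctor C n).Additive] {X : C}
    (hX : IsSmallObject X) (n : ℤ) :
    IsSmallObject (X⟦n⟧) := by
  have : (shiftEquiv C n).functor.Additive := inferInstanceAs (shiftFunctor C n).Additive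
  exact hX.of_adjunction (shiftEquiv C n).toAdjunction

lemma eq_zero_of_comp_shift_map_eq_zero [∀ n : ℤ, (shiftFunctor C n).Additive] {M B B' : C}
    {t : B ⟶ B'} (ht : ∀ (n : ℤ) (k : M⟦n⟧ ⟶ B), k ≫ t = 0 → k = 0) {a n : ℤ} (v : M⟦n⟧ ⟶ B⟦a⟧)
    (hv : v ≫ t⟦a⟧' = 0) : v = 0 := by
  let e := (shiftFunctorAdd' C (n - a) a n (by omega)).app M
  obtain ⟨k, hk⟩ := (shiftFunctor C a).map_surjective (e.inv ≫ v)
  have hkt : k ≫ t = 0 := (shiftFunctor C a).map_injective (by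
    rw [Functor.map_comp, hk, Category.assoc, hv, Limits.comp_zero, Functor.map_zero])
  rw [← cancel_epi e.inv, ← hk, ht _ k hkt, Functor.map_zero, Limits.comp_zero]

structure CellularTower (M X : C) where
  obj : ℕ → C
  map : ∀ k, obj k ⟶ obj (k + 1)
  π : ∀ k, obj k ⟶ X
  map_π : ∀ k, map k ≫ π (k + 1) = π k
  exists_lift : ∀ (n : ℤ) (g : M⟦n⟧ ⟶ X), ∃ g₀, g₀ ≫ π 0 = g
  map_eq_zero : ∀ (k : ℕ) (n : ℤ) (g : M⟦n⟧ ⟶ obj k), g ≫ π k = 0 → g ≫ map k = 0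

end Shift

section Pretriangulated

variable {C : Type u} [Category.{v} C] [Preadditive C] [HasZeroObject C] [HasShift C ℤ]
  [∀ n : ℤ, (shiftFunctor C n).Additive] [Pretriangulated C]

lemma isIso_of_shift_hom_bijective {M X Y : C}
    (hdet : ∀ Z : C, (∀ (n : ℤ) (f : M⟦n⟧ ⟶ Z), f = 0) → IsZero Z) {q : Y ⟶ X}
    (hsurj : ∀ (n : ℤ) (g : M⟦n⟧ ⟶ X), ∃ h, h ≫ q = g)
    (hinj : ∀ (n : ℤ) (h : M⟦n⟧ ⟶ Y), h ≫ q = 0 → h = 0) : IsIso q := by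
  obtain ⟨Z, r, w, hT⟩ := distinguished_cocone_triangle q
  refine (Triangle.isZero₃_iff_isIso₁ _ hT).1 (hdet Z fun n g => ?_)
  have hwq : w ≫ q⟦(1 : ℤ)⟧' = 0 := comp_distTriang_mor_zero₃₁ _ hT
  have hqr : q ≫ r = 0 := comp_distTriang_mor_zero₁₂ _ hT
  have hgw : g ≫ w = 0 := eq_zero_of_comp_shift_map_eq_zero hinj _ (by
    rw [Category.assoc, hwq, Limits.comp_zero])
  obtain ⟨g', rfl⟩ : ∃ g', g = g' ≫ r := Triangle.coyoneda_exact₃ _ hT g hgw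
  obtain ⟨h, rfl⟩ := hsurj n g'
  rw [Category.assoc, hqr, Limits.comp_zero]

end Pretriangulated

lemma isLocalizingClass_setOf_subsingleton_hom_shift (X : C) :
    IsLocalizingClass {Y : C | ∀ n : ℤ, Subsingleton (Y ⟶ X⟦n⟧)} := by
  have shift_mem (Y : C) (m : ℤ) (hY : ∀ n : ℤ, Subsingleton (Y ⟶ X⟦n⟧)) (n : ℤ) :
      Subsingleton (Y⟦m⟧ ⟶ X⟦n⟧) :=
    have := hY (n + -m)
    ((shiftEquiv C m).toAdjunction.homEquiv Y (X⟦n⟧)).trans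
      ((shiftFunctorAdd' C n (-m) (n + -m) rfl).app X).symm.homToEquiv |>.subsingleton
  refine ⟨fun e hY n => ?_, shift_mem, fun T hT h₁ h₂ n => ?_, fun Y hY n => ?_⟩
  · have := hY n
    exact e.homFromEquiv.symm.subsingleton
  · refine subsingleton_of_forall_eq 0 fun g => ?_
    obtain ⟨k, rfl⟩ := Triangle.yoneda_exact₃ T hT g ((h₂ n).elim _ _)
    rw [(shift_mem _ 1 h₁ n).elim k 0, Limits.comp_zero]
  · exact ⟨fun f g => Sigma.hom_ext _ _ fun i => (hY i n).elim _ _⟩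

lemma isZero_of_forall_shift_hom_eq_zero {M X : C}
    (hgen : ∀ S : Set C, IsLocalizingClass S → M ∈ S → ∀ X : C, X ∈ S)
    (hX : ∀ (n : ℤ) (f : M⟦n⟧ ⟶ X), f = 0) : IsZero X := by
  have hMS (n : ℤ) : Subsingleton (M ⟶ X⟦n⟧) :=
    @Equiv.subsingleton _ _
      ((shiftEquiv' C (-n) n (neg_add_cancel n)).toAdjunction.homEquiv M X).symm
      (subsingleton_of_forall_eq 0 (hX (-n)))
  have := hgen _ (isLocalizingClass_setOf_subsingleton_hom_shift X) hMS X 0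
  have : Subsingleton (X ⟶ X) := ((shiftFunctorZero C ℤ).app X).homToEquiv.symm.subsingleton
  exact (IsZero.iff_id_eq_zero X).2 (Subsingleton.elim _ _)

lemma IsLocalizingClass.sigma_shift_mem {S : Set C} (hS : IsLocalizingClass S) {M : C}
    (hMS : M ∈ S) {ι : Type v} (n : ι → ℤ) : (∐ fun i => M⟦n i⟧) ∈ S :=
  hS.coproduct_mem _ fun i => hS.shift_mem M (n i) hMS

lemma IsLocalizingClass.exists_kill {S : Set C} (hS : IsLocalizingClass S) {M : C}
    (hMS : M ∈ S) {V X : C} (hV : V ∈ S) (p : V ⟶ X) :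
    ∃ (V' : C) (u : V ⟶ V') (p' : V' ⟶ X), V' ∈ S ∧ u ≫ p' = p ∧
      ∀ (n : ℤ) (g : M⟦n⟧ ⟶ V), g ≫ p = 0 → g ≫ u = 0 := by
  let w : (∐ fun j : (n : ℤ) × {g : M⟦n⟧ ⟶ V // g ≫ p = 0} => M⟦j.1⟧) ⟶ V :=
    Sigma.desc fun j => j.2.1
  obtain ⟨V', u, δ, hT⟩ := distinguished_cocone_triangle w
  have hwu : w ≫ u = 0 := comp_distTriang_mor_zero₁₂ _ hT
  have hwp : w ≫ p = 0 := Sigma.hom_ext _ _ fun j => by simp [w, j.2.2]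
  obtain ⟨p', hp'⟩ : ∃ p', p = u ≫ p' := Triangle.yoneda_exact₂ _ hT p hwp
  refine ⟨V', u, p', hS.triangle_closed _ hT (hS.sigma_shift_mem hMS _) hV, hp'.symm,
    fun n g hg => ?_⟩
  have hgw : Sigma.ι _ ⟨n, g, hg⟩ ≫ w = g := Sigma.ι_desc _ _
  rw [← hgw, Category.assoc, hwu, Limits.comp_zero]

lemma IsLocalizingClass.exists_cellularTower {S : Set C} (hS : IsLocalizingClass S) {M : C}
    (hMS : M ∈ S) (X : C) : ∃ T : CellularTower M X, ∀ k, T.obj k ∈ S := by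
  choose V' u p' hV' hup' hu using fun (V : S) (p : (V : C) ⟶ X) => hS.exists_kill hMS V.2 p
  let p₀ : (∐ fun j : (n : ℤ) × (M⟦n⟧ ⟶ X) => M⟦j.1⟧) ⟶ X := Sigma.desc fun j => j.2
  let F : ℕ → (V : S) × ((V : C) ⟶ X) := fun k =>
    Nat.rec ⟨⟨_, hS.sigma_shift_mem hMS _⟩, p₀⟩ (fun _ Vp => ⟨⟨_, hV' Vp.1 Vp.2⟩, p' Vp.1 Vp.2⟩) k
  refine ⟨{ obj := fun k => (F k).1
            map := fun k => u (F k).1 (F k).2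
            π := fun k => (F k).2
            map_π := fun k => hup' (F k).1 (F k).2
            exists_lift := fun n g =>
              ⟨Sigma.ι (fun j : (n : ℤ) × (M⟦n⟧ ⟶ X) => M⟦j.1⟧) ⟨n, g⟩, Sigma.ι_desc _ _⟩
            map_eq_zero := fun k => hu (F k).1 (F k).2 }, fun k => (F k).1.2⟩

lemma CellularTower.eq_zero_of_comp_eq_zero {M X : C} (T : CellularTower M X)
    (hM : IsSmallObject M) {Y : C} {σ : natCoprod T.obj ⟶ Y}
    {δ : Y ⟶ (natCoprod T.obj)⟦(1 : ℤ)⟧}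
    (hT : Triangle.mk (telescopeDiff T.obj T.map) σ δ ∈ distTriang C) {q : Y ⟶ X}
    (hq : ∀ k, natCoprod.ι T.obj k ≫ σ ≫ q = T.π k) {n : ℤ} (h : M⟦n⟧ ⟶ Y)
    (hh : h ≫ q = 0) : h = 0 := by
  have hσ : telescopeDiff T.obj T.map ≫ σ = 0 := comp_distTriang_mor_zero₁₂ _ hT
  have hδ' : δ ≫ (telescopeDiff T.obj T.map)⟦(1 : ℤ)⟧' = 0 := comp_distTriang_mor_zero₃₁ _ hT
  have hδ : h ≫ δ = 0 := eq_zero_of_comp_shift_map_eq_zero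
    (fun m _ hk => (hM.shift m).eq_zero_of_comp_telescopeDiff_eq_zero hk) _
    (by rw [Category.assoc, hδ', Limits.comp_zero])
  obtain ⟨a, rfl⟩ : ∃ a, h = a ≫ σ := Triangle.coyoneda_exact₃ _ hT h hδ
  obtain ⟨N, β, hβ⟩ := (hM.shift n).exists_comp_eq_ι_comp hσ a
  have hβπ : β ≫ T.π N = 0 := by
    rw [← hq, ← reassoc_of% hβ, ← hh, Category.assoc]
  rw [hβ, ι_comp_eq_of_telescopeDiff_comp_eq_zero hσ, reassoc_of% (T.map_eq_zero N n β hβπ),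
    Limits.zero_comp]

lemma IsSmallObject.mem_of_detects {M : C} (hM : IsSmallObject M)
    (hdet : ∀ Z : C, (∀ (n : ℤ) (f : M⟦n⟧ ⟶ Z), f = 0) → IsZero Z) {S : Set C}
    (hS : IsLocalizingClass S) (hMS : M ∈ S) (X : C) : X ∈ S := by
  obtain ⟨T, hTS⟩ := hS.exists_cellularTower hMS X
  have hA : natCoprod T.obj ∈ S := hS.coproduct_mem _ fun i => hTS i.down
  obtain ⟨Y, σ, δ, hY⟩ := distinguished_cocone_triangle (telescopeDiff T.obj T.map)
  let p : natCoprod T.obj ⟶ X := Sigma.desc fun i => T.π i.down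
  have hp : telescopeDiff T.obj T.map ≫ p = 0 :=
    Sigma.hom_ext _ _ fun ⟨k⟩ => by simp [p, T.map_π]
  obtain ⟨q, hq⟩ : ∃ q, p = σ ≫ q := Triangle.yoneda_exact₂ _ hY p hp
  have hιq (k : ℕ) : natCoprod.ι T.obj k ≫ σ ≫ q = T.π k := by
    simp [← hq, p]
  have : IsIso q := isIso_of_shift_hom_bijective hdet
    (fun n g => ⟨(T.exists_lift n g).choose ≫ natCoprod.ι T.obj 0 ≫ σ,
      by rw [Category.assoc, Category.assoc, hιq, (T.exists_lift n g).choose_spec]⟩)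
    (fun _ h hh => T.eq_zero_of_comp_eq_zero hM hY hιq h hh)
  exact hS.iso_closed (asIso q) (hS.triangle_closed _ hY hA hA)

/-- A small object `M` of a triangulated category with coproducts generates it (the
smallest localizing class containing `M` is everything) if and only if `M` detects
objects: `X` is zero iff there are no nonzero maps `M⟦n⟧ ⟶ X` for any `n ∈ ℤ`. -/
theorem small_generator_iff_detects_objects (M : C) (hM : IsSmallObject M) :
    (∀ S : Set C, IsLocalizingClass S → M ∈ S → ∀ X : C, X ∈ S) ↔
    (∀ X : C, IsZero X ↔ ∀ (n : ℤ) (f : M⟦n⟧ ⟶ X), f = 0) := by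
  refine ⟨fun hgen X => ⟨fun hX _ f => hX.eq_of_tgt f 0, isZero_of_forall_shift_hom_eq_zero hgen⟩,
    fun hdet S hS hMS X => hM.mem_of_detects (fun Z => (hdet Z).2) hS hMS X⟩
end

section
/- Let F : S → T be an exact functor between triangulated categories with arbitrary coproducts that preserves coproducts. Suppose S has a small generator P such that F(P) is a small generator of T and F induces bijections S(P[n], P) → T(F(P)[n], F(P)) for all integers n. Then F is an equivalence of categories. -/
/-!
Say that `F` is bijective on `(X, Y)` if it induces a bijection `C(X, Y) → D(F X, F Y)`.
The objects `Y` such that `F` is bijective on `(P, Y⟦n⟧)` for all `n` form a localizing class: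
closure under cones is the five lemma on the long exact sequences of `C(P, -)` and `D(F P, F -)`,
and closure under coproducts holds because `P` and `F P` are small. This class contains `P` by
hypothesis, so it is everything. Then the objects `X` such that `F` is bijective on `(X, Y)` for
all `Y` form a localizing class (the five lemma again, now for `C(-, Y)`) containing `P`, so `F`
is fully faithful. Finally, the essential image of a fully faithful triangulated functor
preserving coproducts is localizing and contains `F P`.
-/

open CategoryTheory Limits Pretriangulated DirectSum

universe v u u'

section

variable {C : Type u} [Category.{v} C] [Preadditive C] [HasCoproducts.{v} C]

variable [HasZeroObject C] [HasShift C ℤ] [∀ n : ℤ, (shiftFunctor C n).Additive]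
  [Pretriangulated C]

/-- An object `M` generates a triangulated category if the only localizing class of
objects containing `M` is the class of all objects. -/
def IsGenerator (M : C) : Prop :=
  ∀ S : Set C, IsLocalizingClass S → M ∈ S → ∀ X : C, X ∈ S

end

section

variable {C : Type*} [Category* C] [Preadditive C] [HasZeroObject C] [HasShift C ℤ]
  [∀ n : ℤ, (shiftFunctor C n).Additive] [Pretriangulated C]
  {T : Triangle C}

lemma CategoryTheory.Pretriangulated.exact_rightComp_of_distinguished
    (hT : T ∈ distTriang C) (A : C) :
    Function.Exact (Preadditive.rightComp A T.mor₁) (Preadditive.rightComp A T.mor₂) := by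
  intro g
  refine ⟨fun hg => ?_, ?_⟩
  · obtain ⟨f, hf⟩ := T.coyoneda_exact₂ hT g hg
    exact ⟨f, hf.symm⟩
  · rintro ⟨f, rfl⟩
    change (f ≫ T.mor₁) ≫ T.mor₂ = 0
    simp [comp_distTriang_mor_zero₁₂ T hT]

lemma CategoryTheory.Pretriangulated.exact_leftComp_of_distinguished
    (hT : T ∈ distTriang C) (B : C) :
    Function.Exact (Preadditive.leftComp B T.mor₂) (Preadditive.leftComp B T.mor₁) := by
  intro g
  refine ⟨fun hg => ?_, ?_⟩
  · obtain ⟨f, hf⟩ := T.yoneda_exact₂ hT g hg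
    exact ⟨f, hf.symm⟩
  · rintro ⟨f, rfl⟩
    change T.mor₁ ≫ T.mor₂ ≫ f = 0
    simp [comp_distTriang_mor_zero₁₂_assoc T hT]

end

namespace CategoryTheory.Functor

section General

variable {C : Type*} [Category* C] {D : Type*} [Category* D]

def MapBijective (F : C ⥤ D) (X Y : C) : Prop :=
  Function.Bijective (fun f : X ⟶ Y => F.map f)

variable {F : C ⥤ D}

lemma MapBijective.of_iso {X X' Y Y' : C} (h : F.MapBijective X Y) (e₁ : X ≅ X')
    (e₂ : Y ≅ Y') : F.MapBijective X' Y' := by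
  have hcomm : (fun f : X' ⟶ Y' => F.map f) ∘ e₁.homCongr e₂ =
      (F.mapIso e₁).homCongr (F.mapIso e₂) ∘ (fun f : X ⟶ Y => F.map f) := by
    ext f
    simp [Iso.homCongr_apply]
  have hbij := (Equiv.bijective ((F.mapIso e₁).homCongr (F.mapIso e₂))).comp h
  rw [← hcomm] at hbij
  exact (Function.Bijective.of_comp_iff _ (Equiv.bijective _)).1 hbij

lemma MapBijective.shift [HasShift C ℤ] [HasShift D ℤ] [F.CommShift ℤ] {X Y : C}
    (h : F.MapBijective X Y) (n : ℤ) : F.MapBijective (X⟦n⟧) (Y⟦n⟧) := by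
  let e := F.commShiftIso n
  have hcomm : (fun g : X⟦n⟧ ⟶ Y⟦n⟧ => F.map g) ∘ (fun f : X ⟶ Y => f⟦n⟧') =
      (e.app X).symm.homCongr (e.app Y).symm ∘ (fun u : F.obj X ⟶ F.obj Y => u⟦n⟧') ∘
        (fun f : X ⟶ Y => F.map f) := by
    ext f
    simp [e, Iso.homCongr_apply]
  refine (Function.Bijective.of_comp_iff _
    ⟨(shiftFunctor C n).map_injective, (shiftFunctor C n).map_surjective⟩).1 ?_
  rw [hcomm]
  exact (Equiv.bijective _).comp (Function.Bijective.comp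
    ⟨(shiftFunctor D n).map_injective, (shiftFunctor D n).map_surjective⟩ h)

lemma mapBijective_shift_iff [HasShift C ℤ] [HasShift D ℤ] [F.CommShift ℤ] (X Y : C)
    (n : ℤ) :
    F.MapBijective (X⟦n⟧) Y ↔
      Function.Bijective (fun f : X⟦n⟧ ⟶ Y => (F.commShiftIso n).inv.app X ≫ F.map f) :=
  (Function.Bijective.of_comp_iff' ((F.commShiftIso n).app X).homFromEquiv.bijective _).symm

lemma mapBijective_from_sigma {ι : Type*} (X : ι → C) [HasCoproduct X]
    [PreservesColimit (Discrete.functor X) F] {Y : C} (h : ∀ i, F.MapBijective (X i) Y) :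
    F.MapBijective (∐ X) Y := by
  refine ⟨fun f g hfg => Sigma.hom_ext _ _ fun i => (h i).1 ?_, fun u => ?_⟩
  · simp only [Functor.map_comp]
    exact congrArg _ hfg
  · choose g hg using fun i => (h i).2 (F.map (Sigma.ι X i) ≫ u)
    refine ⟨Limits.Sigma.desc g, Cofan.IsColimit.hom_ext
      (isColimitOfHasCoproductOfPreservesColimit F X) _ _ fun i => ?_⟩
    simp [← Functor.map_comp, hg]

section Additive

variable [Preadditive C] [Preadditive D] (F : C ⥤ D) [F.Additive]

lemma rightComp_map_comp_mapAddHom (A : C) {X Y : C} (g : X ⟶ Y) :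
    (Preadditive.rightComp (F.obj A) (F.map g)).comp F.mapAddHom =
      F.mapAddHom.comp (Preadditive.rightComp A g) := by
  ext f
  simp [Preadditive.rightComp]

lemma leftComp_map_comp_mapAddHom (B : C) {X Y : C} (g : X ⟶ Y) :
    (Preadditive.leftComp (F.obj B) (F.map g)).comp F.mapAddHom =
      F.mapAddHom.comp (Preadditive.leftComp B g) := by
  ext f
  simp [Preadditive.leftComp]

end Additive

section Triangulated

variable [Preadditive C] [HasZeroObject C] [HasShift C ℤ]
  [∀ n : ℤ, (shiftFunctor C n).Additive] [Pretriangulated C]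
  [Preadditive D] [HasZeroObject D] [HasShift D ℤ]
  [∀ n : ℤ, (shiftFunctor D n).Additive] [Pretriangulated D]
  [F.CommShift ℤ] [F.IsTriangulated] {T : Triangle C}

-- The two rows are the `Hom`-sequences along `T`, `T.rotate` and `T.rotate.rotate`.
lemma mapBijective_to_obj₃ (hT : T ∈ distTriang C) {A : C}
    (h₁ : F.MapBijective A T.obj₁) (h₂ : F.MapBijective A T.obj₂)
    (h₁' : F.MapBijective A (T.obj₁⟦(1 : ℤ)⟧)) (h₂' : F.MapBijective A (T.obj₂⟦(1 : ℤ)⟧)) :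
    F.MapBijective A T.obj₃ :=
  have hT' := rot_of_distTriang _ hT
  have hT'' := rot_of_distTriang _ hT'
  AddMonoidHom.bijective_of_surjective_of_bijective_of_bijective_of_injective
    (Preadditive.rightComp A T.mor₁) (Preadditive.rightComp A T.mor₂)
    (Preadditive.rightComp A T.mor₃) (Preadditive.rightComp A T.rotate.rotate.mor₂)
    (Preadditive.rightComp _ (F.map T.mor₁)) (Preadditive.rightComp _ (F.map T.mor₂))
    (Preadditive.rightComp _ (F.map T.mor₃))
    (Preadditive.rightComp _ (F.map T.rotate.rotate.mor₂))
    F.mapAddHom F.mapAddHom F.mapAddHom F.mapAddHom F.mapAddHom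
    (F.rightComp_map_comp_mapAddHom _ _) (F.rightComp_map_comp_mapAddHom _ _)
    (F.rightComp_map_comp_mapAddHom _ _) (F.rightComp_map_comp_mapAddHom _ _)
    (exact_rightComp_of_distinguished hT A) (exact_rightComp_of_distinguished hT' A)
    (exact_rightComp_of_distinguished hT'' A)
    (exact_rightComp_of_distinguished (F.map_distinguished _ hT) _)
    (exact_rightComp_of_distinguished (F.map_distinguished _ hT') _)
    (exact_rightComp_of_distinguished (F.map_distinguished _ hT'') _)
    h₁.2 h₂ h₁' h₂'.1

lemma mapBijective_from_obj₃ (hT : T ∈ distTriang C) {B : C}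
    (h₁ : F.MapBijective T.obj₁ B) (h₂ : F.MapBijective T.obj₂ B)
    (h₁' : F.MapBijective (T.obj₁⟦(1 : ℤ)⟧) B) (h₂' : F.MapBijective (T.obj₂⟦(1 : ℤ)⟧) B) :
    F.MapBijective T.obj₃ B :=
  have hT' := rot_of_distTriang _ hT
  have hT'' := rot_of_distTriang _ hT'
  AddMonoidHom.bijective_of_surjective_of_bijective_of_bijective_of_injective
    (Preadditive.leftComp B T.rotate.rotate.mor₂) (Preadditive.leftComp B T.mor₃)
    (Preadditive.leftComp B T.mor₂) (Preadditive.leftComp B T.mor₁)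
    (Preadditive.leftComp _ (F.map T.rotate.rotate.mor₂))
    (Preadditive.leftComp _ (F.map T.mor₃))
    (Preadditive.leftComp _ (F.map T.mor₂)) (Preadditive.leftComp _ (F.map T.mor₁))
    F.mapAddHom F.mapAddHom F.mapAddHom F.mapAddHom F.mapAddHom
    (F.leftComp_map_comp_mapAddHom _ _) (F.leftComp_map_comp_mapAddHom _ _)
    (F.leftComp_map_comp_mapAddHom _ _) (F.leftComp_map_comp_mapAddHom _ _)
    (exact_leftComp_of_distinguished hT'' B) (exact_leftComp_of_distinguished hT' B)
    (exact_leftComp_of_distinguished hT B)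
    (exact_leftComp_of_distinguished (F.map_distinguished _ hT'') _)
    (exact_leftComp_of_distinguished (F.map_distinguished _ hT') _)
    (exact_leftComp_of_distinguished (F.map_distinguished _ hT) _)
    h₂'.2 h₁' h₂ h₁.1

end Triangulated

end General

section Coproducts

variable {C : Type u} [Category.{v} C] [Preadditive C] [HasCoproducts.{v} C]
  {D : Type u'} [Category.{v} D] [Preadditive D] [HasCoproducts.{v} D]
  {F : C ⥤ D} [F.Additive]

lemma mapBijective_to_sigma {X : C} (hX : IsSmallObject X) (hFX : IsSmallObject (F.obj X))
    {ι : Type v} (Y : ι → C) [PreservesColimit (Discrete.functor Y) F]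
    (h : ∀ i, F.MapBijective X (Y i)) : F.MapBijective X (∐ Y) := by
  classical
  have hcomm : F.mapAddHom.comp (coproductComparison X Y) =
      (Preadditive.rightComp _ (sigmaComparison F Y)).comp
        ((coproductComparison (F.obj X) fun i => F.obj (Y i)).comp
          (DirectSum.map fun i => F.mapAddHom)) := by
    ext i f
    simp [coproductComparison, Preadditive.rightComp]
  have hmap : Function.Bijective (DirectSum.map fun i => (F.mapAddHom : (X ⟶ Y i) →+ _)) :=
    ⟨(DirectSum.map_injective _).2 fun i => (h i).1,
      (DirectSum.map_surjective _).2 fun i => (h i).2⟩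
  refine (Function.Bijective.of_comp_iff _ (hX ι Y)).1 ?_
  change Function.Bijective (F.mapAddHom.comp (coproductComparison X Y))
  rw [hcomm]
  exact (asIso (sigmaComparison F Y)).homToEquiv.bijective.comp ((hFX ι _).comp hmap)

end Coproducts

section Localizing

variable {C : Type u} [Category.{v} C] [Preadditive C] [HasCoproducts.{v} C]
  [HasZeroObject C] [HasShift C ℤ] [∀ n : ℤ, (shiftFunctor C n).Additive] [Pretriangulated C]
  {D : Type u'} [Category.{v} D] [Preadditive D]
  [HasZeroObject D] [HasShift D ℤ] [∀ n : ℤ, (shiftFunctor D n).Additive] [Pretriangulated D]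
  {F : C ⥤ D} [F.CommShift ℤ] [F.IsTriangulated]

lemma isLocalizingClass_mapBijective_from
    (hpres : ∀ ι : Type v, PreservesColimitsOfShape (Discrete ι) F) :
    IsLocalizingClass {X : C | ∀ Y : C, F.MapBijective X Y} := by
  have shift_mem (X : C) (n : ℤ) (hX : ∀ Y, F.MapBijective X Y) (Y : C) :
      F.MapBijective (X⟦n⟧) Y :=
    ((hX (Y⟦-n⟧)).shift n).of_iso (Iso.refl _)
      ((shiftFunctorCompIsoId C (-n) n (neg_add_cancel n)).app Y)
  exact
    { iso_closed := fun e hX Y => (hX Y).of_iso e (Iso.refl Y)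
      shift_mem := shift_mem
      triangle_closed := fun T hT h₁ h₂ Y =>
        mapBijective_from_obj₃ hT (h₁ Y) (h₂ Y) (shift_mem _ 1 h₁ Y) (shift_mem _ 1 h₂ Y)
      coproduct_mem := fun {ι} X hX Y => by
        have := hpres ι
        exact mapBijective_from_sigma X fun i => hX i Y }

variable [HasCoproducts.{v} D]

lemma isLocalizingClass_mapBijective_shifts
    (hpres : ∀ ι : Type v, PreservesColimitsOfShape (Discrete ι) F)
    {P : C} (hP : IsSmallObject P) (hFP : IsSmallObject (F.obj P)) :
    IsLocalizingClass {Y : C | ∀ n : ℤ, F.MapBijective P (Y⟦n⟧)} where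
  iso_closed e hY n := (hY n).of_iso (Iso.refl P) ((shiftFunctor C n).mapIso e)
  shift_mem X m hX n := (hX (m + n)).of_iso (Iso.refl P) ((shiftFunctorAdd C m n).app X)
  triangle_closed T hT h₁ h₂ n :=
    mapBijective_to_obj₃ (Triangle.shift_distinguished T hT n) (h₁ n) (h₂ n)
      ((h₁ (n + 1)).of_iso (Iso.refl P) ((shiftFunctorAdd C n 1).app _))
      ((h₂ (n + 1)).of_iso (Iso.refl P) ((shiftFunctorAdd C n 1).app _))
  coproduct_mem {ι} Y hY n := by
    have := hpres ι
    exact (mapBijective_to_sigma hP hFP _ fun i => hY i n).of_iso (Iso.refl P)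
      (asIso (sigmaComparison (shiftFunctor C n) Y))

lemma isLocalizingClass_essImage [F.Full]
    (hpres : ∀ ι : Type v, PreservesColimitsOfShape (Discrete ι) F) :
    IsLocalizingClass {Z : D | F.essImage Z} where
  iso_closed e h := F.essImage.prop_of_iso e h
  shift_mem Z n h := F.essImage.le_shift n Z h
  triangle_closed T hT h₁ h₂ := F.essImage.ext_of_isTriangulatedClosed₃ T hT h₁ h₂
  coproduct_mem {ι} Z hZ := by
    have := hpres ι
    choose X e using hZ
    exact ⟨∐ X, ⟨(asIso (sigmaComparison F X)).symm ≪≫ Sigma.mapIso fun i => (e i).some⟩⟩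

end Localizing

end CategoryTheory.Functor

/-- Let `F : C ⥤ D` be an exact, coproduct-preserving functor between triangulated
categories with arbitrary coproducts.  If `C` has a small generator `P` such that
`F P` is a small generator of `D` and `F` induces bijections
`C(P⟦n⟧, P) → D((F P)⟦n⟧, F P)` for all integers `n`, then `F` is an equivalence of
categories. -/
theorem exact_functor_isEquivalence_of_small_generator
    {C : Type u} [Category.{v} C] [Preadditive C] [HasCoproducts.{v} C]
    [HasZeroObject C] [HasShift C ℤ] [∀ n : ℤ, (shiftFunctor C n).Additive]
    [Pretriangulated C]
    {D : Type u'} [Category.{v} D] [Preadditive D] [HasCoproducts.{v} D]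
    [HasZeroObject D] [HasShift D ℤ] [∀ n : ℤ, (shiftFunctor D n).Additive]
    [Pretriangulated D]
    (F : C ⥤ D) [F.CommShift ℤ] [F.IsTriangulated]
    (hpres : ∀ ι : Type v, PreservesColimitsOfShape (Discrete ι) F)
    (P : C) (hPsmall : IsSmallObject P) (hPgen : IsGenerator P)
    (hFPsmall : IsSmallObject (F.obj P)) (hFPgen : IsGenerator (F.obj P))
    (hfull : ∀ n : ℤ, Function.Bijective
      (fun f : P⟦n⟧ ⟶ P => (F.commShiftIso n).inv.app P ≫ F.map f)) :
    F.IsEquivalence := by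
  have hPshifts (n : ℤ) : F.MapBijective P (P⟦n⟧) :=
    (((Functor.mapBijective_shift_iff P P (-n)).2 (hfull (-n))).shift n).of_iso
      ((shiftFunctorCompIsoId C (-n) n (neg_add_cancel n)).app P) (Iso.refl _)
  have hP (Y : C) : F.MapBijective P Y :=
    (hPgen _ (Functor.isLocalizingClass_mapBijective_shifts hpres hPsmall hFPsmall)
      hPshifts Y 0).of_iso (Iso.refl P) ((shiftFunctorZero C ℤ).app Y)
  have hF : ∀ X Y : C, F.MapBijective X Y :=
    hPgen _ (Functor.isLocalizingClass_mapBijective_from hpres) hP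
  have : F.Faithful := ⟨fun h => (hF _ _).1 h⟩
  have : F.Full := ⟨fun f => (hF _ _).2 f⟩
  have : F.EssSurj := ⟨hFPgen _ (Functor.isLocalizingClass_essImage hpres) (F.obj_mem_essImage P)⟩
  exact { }
end
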